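/- Let F = A^{1/m} be an m-th root Finsler metric on an open subset U ⊆ ℝⁿ whose Hessian matrix (A_{ij}) is invertible, so the spray coefficients are G^i = (1/2)(A_{0j} − A_{x^j}) A^{ij}. Then F is an Antonelli metric — i.e. there exist functions Γ^i_{jk}(y), smooth on ℝⁿ ∖ {0}, symmetric in j,k, positively homogeneous of degree 0 in y, with G^i = (1/2) Γ^i_{jk}(y) y^j y^k — if and only if there exist such functions Γ^i_{jk}(y) with A_{x^l} = [ Γ^i_{lk} y^k + (1/2) Γ^i_{jk,l} y^j y^k ] A_i for every l, where Γ^i_{jk,l} = ∂Γ^i_{jk}/∂y^l. -/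

import Mathlib

open scoped BigOperators

/-- Partial derivative of `f x y` with respect to `y^l` (the second argument). -/
noncomputable def pdy {n : ℕ} (f : (Fin n → ℝ) → (Fin n → ℝ) → ℝ) (l : Fin n) :
    (Fin n → ℝ) → (Fin n → ℝ) → ℝ :=
  fun x y => fderiv ℝ (f x) y (Pi.single l 1)

/-- Partial derivative of `f x y` with respect to `x^l` (the first argument). -/
noncomputable def pdx {n : ℕ} (f : (Fin n → ℝ) → (Fin n → ℝ) → ℝ) (l : Fin n) :
    (Fin n → ℝ) → (Fin n → ℝ) → ℝ :=
  fun x y => fderiv ℝ (fun x' => f x' y) x (Pi.single l 1)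

/-- Partial derivative of a function of `y` alone with respect to `y^l`. -/
noncomputable def pd {n : ℕ} (f : (Fin n → ℝ) → ℝ) (l : Fin n) (y : Fin n → ℝ) : ℝ :=
  fderiv ℝ f y (Pi.single l 1)

/-- `Γ^i_{jk}(y)` is an admissible family of Antonelli coefficients: smooth away from the
origin, symmetric in the lower indices, and positively homogeneous of degree `0` in `y`. -/
def GammaAdmissible {n : ℕ} (Γ : Fin n → Fin n → Fin n → (Fin n → ℝ) → ℝ) : Prop :=
  (∀ i j k, ContDiffOn ℝ (⊤ : ℕ∞) (Γ i j k) {y : Fin n → ℝ | y ≠ 0}) ∧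
  (∀ i j k, Γ i j k = Γ i k j) ∧
  (∀ i j k, ∀ y : Fin n → ℝ, y ≠ 0 → ∀ t : ℝ, 0 < t → Γ i j k (t • y) = Γ i j k y)

namespace AntonelliAux

variable {n : ℕ}

lemma clm_apply_eq_sum (L : (Fin n → ℝ) →L[ℝ] ℝ) (v : Fin n → ℝ) :
    L v = ∑ l, v l * L (Pi.single l 1) := by
  conv_lhs => rw [← Finset.univ_sum_single v, map_sum]
  refine Finset.sum_congr rfl fun l _ => ?_
  have h : (Pi.single l (v l) : Fin n → ℝ) = v l • (Pi.single l (1:ℝ) : Fin n → ℝ) := by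
    funext j
    rcases eq_or_ne j l with h | h <;> simp [Pi.single_apply, h]
  rw [h, map_smul, smul_eq_mul]

lemma pd_sum {ι : Type*} (s : Finset ι) (g : ι → (Fin n → ℝ) → ℝ) (l : Fin n) (y : Fin n → ℝ)
    (h : ∀ i ∈ s, DifferentiableAt ℝ (g i) y) :
    pd (fun z => ∑ i ∈ s, g i z) l y = ∑ i ∈ s, pd (g i) l y := by
  unfold pd
  rw [fderiv_fun_sum h]
  simp

lemma pd_mul (g h : (Fin n → ℝ) → ℝ) (l : Fin n) (y : Fin n → ℝ)
    (hg : DifferentiableAt ℝ g y) (hh : DifferentiableAt ℝ h y) :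
    pd (fun z => g z * h z) l y = pd g l y * h y + g y * pd h l y := by
  unfold pd
  rw [fderiv_fun_mul hg hh]
  simp [smul_eq_mul]
  ring

lemma pd_const_mul (g : (Fin n → ℝ) → ℝ) (c : ℝ) (l : Fin n) (y : Fin n → ℝ)
    (hg : DifferentiableAt ℝ g y) :
    pd (fun z => c * g z) l y = c * pd g l y := by
  unfold pd
  rw [fderiv_const_mul hg]
  simp

lemma differentiableAt_coord (k : Fin n) (y : Fin n → ℝ) :
    DifferentiableAt ℝ (fun z : Fin n → ℝ => z k) y :=
  (ContinuousLinearMap.proj (R := ℝ) (φ := fun _ : Fin n => ℝ) k).differentiableAt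

lemma pd_coord (k l : Fin n) (y : Fin n → ℝ) :
    pd (fun z : Fin n → ℝ => z k) l y = if k = l then 1 else 0 := by
  unfold pd
  have : (fun z : Fin n → ℝ => z k)
      = (ContinuousLinearMap.proj (R := ℝ) (φ := fun _ : Fin n => ℝ) k) := rfl
  rw [this, ContinuousLinearMap.fderiv]
  simp [Pi.single_apply]

lemma euler {f : (Fin n → ℝ) → ℝ} {d : ℕ} {y : Fin n → ℝ}
    (hf : DifferentiableAt ℝ f y)
    (hhom : ∀ᶠ t in nhds (1:ℝ), f (t • y) = t ^ d * f y) :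
    ∑ l, pd f l y * y l = d * f y := by
  have hc : HasDerivAt (fun t : ℝ => t • y) y 1 := by
    simpa using (hasDerivAt_id (1:ℝ)).smul_const y
  have hF : HasFDerivAt f (fderiv ℝ f y) ((1:ℝ) • y) := by
    simpa using hf.hasFDerivAt
  have h1 : HasDerivAt (fun t : ℝ => f (t • y)) (fderiv ℝ f y y) 1 := by
    exact hF.comp_hasDerivAt 1 hc
  have h2 : HasDerivAt (fun t : ℝ => t ^ d * f y) ((d : ℝ) * f y) 1 := by
    simpa using (hasDerivAt_pow d (1:ℝ)).mul_const (f y)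
  have h3 : HasDerivAt (fun t : ℝ => f (t • y)) ((d : ℝ) * f y) 1 :=
    h2.congr_of_eventuallyEq hhom
  have h4 : fderiv ℝ f y y = (d : ℝ) * f y := h1.unique h3
  calc ∑ l, pd f l y * y l = fderiv ℝ f y y := by
        rw [clm_apply_eq_sum (fderiv ℝ f y) y]
        exact Finset.sum_congr rfl fun l _ => mul_comm _ _
    _ = (d : ℝ) * f y := h4

lemma pd_homog {f : (Fin n → ℝ) → ℝ} {d : ℕ} (hd : 1 ≤ d)
    (hf : Differentiable ℝ f)
    (hhom : ∀ (z : Fin n → ℝ) (t : ℝ), f (t • z) = t ^ d * f z)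
    (i : Fin n) (y : Fin n → ℝ) {t : ℝ} (ht : t ≠ 0) :
    pd f i (t • y) = t ^ (d - 1) * pd f i y := by
  set L : (Fin n → ℝ) →L[ℝ] (Fin n → ℝ) := t • (ContinuousLinearMap.id ℝ (Fin n → ℝ)) with hL
  have hcomp : (fun z => f (L z)) = fun z => t ^ d * f z := by
    funext z
    simp [hL, hhom z t]
  have h1 : fderiv ℝ (fun z => f (L z)) y = (fderiv ℝ f (L y)).comp L := by
    have := fderiv_comp (𝕜 := ℝ) (g := f) (f := fun z => L z) y (hf _) L.differentiableAt
    simpa [Function.comp_def, L.fderiv] using this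
  have h2 : fderiv ℝ (fun z => t ^ d * f z) y = t ^ d • fderiv ℝ f y :=
    fderiv_const_mul (hf y) _
  have h3 := congrArg (fun (M : (Fin n → ℝ) →L[ℝ] ℝ) => M (Pi.single i 1)) (hcomp ▸ h1)
  -- h3 : fderiv (t^d * f) y (single i 1) = (fderiv f (L y)).comp L (single i 1)
  rw [h2] at h3
  have hLy : L y = t • y := by simp [hL]
  have hLs : L (Pi.single i 1) = t • (Pi.single i 1 : Fin n → ℝ) := by
    simp [hL, ContinuousLinearMap.smul_apply]
  have h4 : t ^ d * pd f i y = t * pd f i (t • y) := by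
    have h5 := h3
    simp only [ContinuousLinearMap.smul_apply, ContinuousLinearMap.comp_apply,
      ContinuousLinearMap.coe_comp, Function.comp_apply,
      hLs, hLy, map_smul, smul_eq_mul] at h5
    unfold pd
    linarith [h5]
  have htd : t ^ d = t * t ^ (d - 1) := by
    rw [← pow_succ']
    congr 1
    omega
  rw [htd] at h4
  have h6 : t * (t ^ (d - 1) * pd f i y) = t * pd f i (t • y) := by ring_nf; ring_nf at h4; linarith
  exact (mul_left_cancel₀ ht h6).symm



variable {n m : ℕ}

noncomputable def polyFun (m n : ℕ) (c : (Fin m → Fin n) → ℝ) : (Fin n → ℝ) → ℝ :=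
  fun y => ∑ ι : Fin m → Fin n, c ι * ∏ k, y (ι k)

lemma polyFun_contDiff (c : (Fin m → Fin n) → ℝ) : ContDiff ℝ (⊤ : ℕ∞) (polyFun m n c) := by
  refine ContDiff.sum fun ι _ => contDiff_const.mul ?_
  exact contDiff_prod fun k _ => contDiff_apply ℝ ℝ (ι k)

lemma polyFun_diff (c : (Fin m → Fin n) → ℝ) : Differentiable ℝ (polyFun m n c) :=
  (polyFun_contDiff c).differentiable (by simp)

lemma polyFun_smul (c : (Fin m → Fin n) → ℝ) (t : ℝ) (y : Fin n → ℝ) :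
    polyFun m n c (t • y) = t ^ m * polyFun m n c y := by
  unfold polyFun
  rw [Finset.mul_sum]
  refine Finset.sum_congr rfl fun ι _ => ?_
  have h : ∏ k, (t • y) (ι k) = t ^ m * ∏ k, y (ι k) := by
    have : ∀ k : Fin m, (t • y) (ι k) = t * y (ι k) := fun k => rfl
    simp_rw [this]
    rw [Finset.prod_mul_distrib, Finset.prod_const, Finset.card_univ, Fintype.card_fin]
  rw [h]; ring

lemma pd_polyFun_contDiff (c : (Fin m → Fin n) → ℝ) (i : Fin n) :
    ContDiff ℝ (⊤ : ℕ∞) (fun y => pd (polyFun m n c) i y) := by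
  have h1 : ContDiff ℝ (⊤ : ℕ∞) (fderiv ℝ (polyFun m n c)) := by
    refine (polyFun_contDiff c).fderiv_right ?_
    exact_mod_cast le_top
  exact h1.clm_apply contDiff_const

lemma pd_polyFun_diff (c : (Fin m → Fin n) → ℝ) (i : Fin n) :
    Differentiable ℝ (fun y => pd (polyFun m n c) i y) :=
  (pd_polyFun_contDiff c i).differentiable (by simp)

lemma euler_polyFun (c : (Fin m → Fin n) → ℝ) (y : Fin n → ℝ) :
    ∑ l, pd (polyFun m n c) l y * y l = m * polyFun m n c y :=
  euler (polyFun_diff c y) (Filter.Eventually.of_forall fun t => polyFun_smul c t y)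

lemma euler_pd_polyFun (hm : 1 ≤ m) (c : (Fin m → Fin n) → ℝ) (i : Fin n) (y : Fin n → ℝ) :
    ∑ l, pd (fun z => pd (polyFun m n c) i z) l y * y l
      = ((m : ℝ) - 1) * pd (polyFun m n c) i y := by
  have hhom : ∀ᶠ t in nhds (1:ℝ), pd (polyFun m n c) i (t • y)
      = t ^ (m - 1) * pd (polyFun m n c) i y := by
    filter_upwards [eventually_ne_nhds one_ne_zero] with t ht
    exact pd_homog hm (polyFun_diff c) (fun z s => polyFun_smul c s z) i y ht
  have := euler (d := m - 1) ((pd_polyFun_diff c i) y) hhom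
  rw [this]
  congr 1
  push_cast [Nat.cast_sub hm]
  ring


noncomputable def Hfun (Γ : Fin n → Fin n → Fin n → (Fin n → ℝ) → ℝ) (i : Fin n) :
    (Fin n → ℝ) → ℝ :=
  fun y => (1/2) * ∑ j, ∑ k, Γ i j k y * y j * y k

variable {Γ : Fin n → Fin n → Fin n → (Fin n → ℝ) → ℝ}

lemma gamma_diffAt (hsm : ∀ i j k, ContDiffOn ℝ (⊤ : ℕ∞) (Γ i j k) {y : Fin n → ℝ | y ≠ 0})
    (i j k : Fin n) {y : Fin n → ℝ} (hy : y ≠ 0) : DifferentiableAt ℝ (Γ i j k) y :=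
  (((hsm i j k).differentiableOn (by simp)).differentiableAt
    ((isOpen_ne (x := (0 : Fin n → ℝ))).mem_nhds hy))

lemma Hfun_contDiffOn (hsm : ∀ i j k, ContDiffOn ℝ (⊤ : ℕ∞) (Γ i j k) {y : Fin n → ℝ | y ≠ 0})
    (i : Fin n) : ContDiffOn ℝ (⊤ : ℕ∞) (Hfun Γ i) {y : Fin n → ℝ | y ≠ 0} := by
  refine contDiffOn_const.mul (ContDiffOn.sum fun j _ => ContDiffOn.sum fun k _ => ?_)
  exact ((hsm i j k).mul ((contDiff_apply ℝ ℝ j).contDiffOn)).mul ((contDiff_apply ℝ ℝ k).contDiffOn)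

lemma Hfun_diffAt (hsm : ∀ i j k, ContDiffOn ℝ (⊤ : ℕ∞) (Γ i j k) {y : Fin n → ℝ | y ≠ 0})
    (i : Fin n) {y : Fin n → ℝ} (hy : y ≠ 0) : DifferentiableAt ℝ (Hfun Γ i) y :=
  ((Hfun_contDiffOn hsm i).differentiableOn (by simp)).differentiableAt
    ((isOpen_ne (x := (0 : Fin n → ℝ))).mem_nhds hy)

lemma pd_Hfun_diffAt (hsm : ∀ i j k, ContDiffOn ℝ (⊤ : ℕ∞) (Γ i j k) {y : Fin n → ℝ | y ≠ 0})
    (i k : Fin n) {y : Fin n → ℝ} (hy : y ≠ 0) :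
    DifferentiableAt ℝ (fun z => pd (Hfun Γ i) k z) y := by
  have h1 : ContDiffOn ℝ (⊤ : ℕ∞) (fderiv ℝ (Hfun Γ i)) {y : Fin n → ℝ | y ≠ 0} :=
    (Hfun_contDiffOn hsm i).fderiv_of_isOpen (isOpen_ne) (by exact_mod_cast le_top)
  have h2 : ContDiffOn ℝ (⊤ : ℕ∞) (fun z => fderiv ℝ (Hfun Γ i) z (Pi.single k 1))
      {y : Fin n → ℝ | y ≠ 0} := h1.clm_apply contDiffOn_const
  exact ((h2.differentiableOn (by simp)).differentiableAt
    ((isOpen_ne (x := (0 : Fin n → ℝ))).mem_nhds hy))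

lemma pd_Hfun (hsm : ∀ i j k, ContDiffOn ℝ (⊤ : ℕ∞) (Γ i j k) {y : Fin n → ℝ | y ≠ 0})
    (hsymm : ∀ i j k, Γ i j k = Γ i k j)
    (i l : Fin n) {y : Fin n → ℝ} (hy : y ≠ 0) :
    pd (Hfun Γ i) l y = (∑ k, Γ i l k y * y k)
      + (1/2) * ∑ j, ∑ k, pd (Γ i j k) l y * y j * y k := by
  have hΓd : ∀ j k, DifferentiableAt ℝ (Γ i j k) y := fun j k => gamma_diffAt hsm i j k hy
  have hmul1 : ∀ j k : Fin n, DifferentiableAt ℝ (fun z => Γ i j k z * z j) y :=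
    fun j k => (hΓd j k).mul (differentiableAt_coord j y)
  have hterm : ∀ j k : Fin n, DifferentiableAt ℝ (fun z => Γ i j k z * z j * z k) y :=
    fun j k => (hmul1 j k).mul (differentiableAt_coord k y)
  have hdsumj : ∀ j : Fin n, DifferentiableAt ℝ (fun z => ∑ k, Γ i j k z * z j * z k) y :=
    fun j => DifferentiableAt.fun_sum fun k _ => hterm j k
  have hdsum : DifferentiableAt ℝ (fun z => ∑ j, ∑ k, Γ i j k z * z j * z k) y :=
    DifferentiableAt.fun_sum fun j _ => hdsumj j
  have step1 : pd (Hfun Γ i) l y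
      = (1/2) * ∑ j, ∑ k,
        ((pd (Γ i j k) l y * y j + Γ i j k y * (if j = l then 1 else 0)) * y k
          + (Γ i j k y * y j) * (if k = l then 1 else 0)) := by
    show pd (fun z => (1/2) * ∑ j, ∑ k, Γ i j k z * z j * z k) l y = _
    rw [pd_const_mul _ _ _ _ hdsum]
    congr 1
    rw [pd_sum _ _ _ _ (fun j _ => hdsumj j)]
    refine Finset.sum_congr rfl fun j _ => ?_
    rw [pd_sum _ _ _ _ (fun k _ => hterm j k)]
    refine Finset.sum_congr rfl fun k _ => ?_
    rw [pd_mul _ _ _ _ (hmul1 j k) (differentiableAt_coord k y),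
      pd_mul _ _ _ _ (hΓd j k) (differentiableAt_coord j y), pd_coord, pd_coord]
  have step2 : ∀ j k : Fin n,
      ((pd (Γ i j k) l y * y j + Γ i j k y * (if j = l then 1 else 0)) * y k
        + (Γ i j k y * y j) * (if k = l then 1 else 0))
      = pd (Γ i j k) l y * y j * y k
        + ((if j = l then Γ i j k y * y k else 0) + (if k = l then Γ i j k y * y j else 0)) := by
    intro j k
    rcases eq_or_ne j l with h | h <;> rcases eq_or_ne k l with h' | h' <;> simp [h, h'] <;> ring
  have hT2 : ∑ j : Fin n, ∑ k : Fin n, (if j = l then Γ i j k y * y k else 0)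
      = ∑ k, Γ i l k y * y k := by
    rw [Finset.sum_comm]
    refine Finset.sum_congr rfl fun k _ => ?_
    simp
  have hT3 : ∑ j : Fin n, ∑ k : Fin n, (if k = l then Γ i j k y * y j else 0)
      = ∑ k, Γ i l k y * y k := by
    have : ∀ j : Fin n, ∑ k : Fin n, (if k = l then Γ i j k y * y j else 0) = Γ i j l y * y j := by
      intro j; simp
    simp_rw [this]
    refine Finset.sum_congr rfl fun j _ => ?_
    rw [show Γ i j l = Γ i l j from hsymm i j l]
  rw [step1]
  calc (1/2) * ∑ j, ∑ k,
        ((pd (Γ i j k) l y * y j + Γ i j k y * (if j = l then 1 else 0)) * y k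
          + (Γ i j k y * y j) * (if k = l then 1 else 0))
      = (1/2) * ((∑ j, ∑ k, pd (Γ i j k) l y * y j * y k)
          + ((∑ j : Fin n, ∑ k : Fin n, (if j = l then Γ i j k y * y k else 0))
            + (∑ j : Fin n, ∑ k : Fin n, (if k = l then Γ i j k y * y j else 0)))) := by
        congr 1
        simp_rw [step2]
        simp [Finset.sum_add_distrib]
    _ = (∑ k, Γ i l k y * y k) + (1/2) * ∑ j, ∑ k, pd (Γ i j k) l y * y j * y k := by
        rw [hT2, hT3]; ring

lemma Hfun_smul (hhom : ∀ i j k, ∀ y : Fin n → ℝ, y ≠ 0 → ∀ t : ℝ, 0 < t → Γ i j k (t • y) = Γ i j k y)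
    (i : Fin n) {y : Fin n → ℝ} (hy : y ≠ 0) {t : ℝ} (ht : 0 < t) :
    Hfun Γ i (t • y) = t ^ 2 * Hfun Γ i y := by
  have step : ∀ j k : Fin n, Γ i j k (t • y) * (t • y) j * (t • y) k
      = t ^ 2 * (Γ i j k y * y j * y k) := by
    intro j k
    rw [hhom i j k y hy t ht]
    show Γ i j k y * (t * y j) * (t * y k) = _
    ring
  unfold Hfun
  simp_rw [step, ← Finset.mul_sum]
  ring

lemma euler_Hfun (hsm : ∀ i j k, ContDiffOn ℝ (⊤ : ℕ∞) (Γ i j k) {y : Fin n → ℝ | y ≠ 0})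
    (hhom : ∀ i j k, ∀ y : Fin n → ℝ, y ≠ 0 → ∀ t : ℝ, 0 < t → Γ i j k (t • y) = Γ i j k y)
    (i : Fin n) {y : Fin n → ℝ} (hy : y ≠ 0) :
    ∑ k, pd (Hfun Γ i) k y * y k = 2 * Hfun Γ i y := by
  have h := euler (d := 2) (Hfun_diffAt hsm i hy) ?_
  · exact_mod_cast h
  · filter_upwards [eventually_gt_nhds (zero_lt_one)] with t ht
    exact Hfun_smul hhom i hy ht

lemma euler_pd_Hfun (hsm : ∀ i j k, ContDiffOn ℝ (⊤ : ℕ∞) (Γ i j k) {y : Fin n → ℝ | y ≠ 0})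
    (hhom : ∀ i j k, ∀ y : Fin n → ℝ, y ≠ 0 → ∀ t : ℝ, 0 < t → Γ i j k (t • y) = Γ i j k y)
    (i j : Fin n) {y : Fin n → ℝ} (hy : y ≠ 0) :
    ∑ k, pd (fun z => pd (Hfun Γ i) k z) j y * y k = pd (Hfun Γ i) j y := by
  have heq : (fun z => ∑ k, pd (Hfun Γ i) k z * z k) =ᶠ[nhds y] (fun z => 2 * Hfun Γ i z) := by
    filter_upwards [(isOpen_ne (x := (0 : Fin n → ℝ))).mem_nhds hy] with z hz
    exact euler_Hfun hsm hhom i hz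
  have hfd := heq.fderiv_eq (𝕜 := ℝ)
  have hL : pd (fun z => ∑ k, pd (Hfun Γ i) k z * z k) j y
      = ∑ k, (pd (fun z => pd (Hfun Γ i) k z) j y * y k
        + pd (Hfun Γ i) k y * (if k = j then 1 else 0)) := by
    rw [pd_sum _ _ _ _ (fun k _ => ((pd_Hfun_diffAt hsm i k hy).fun_mul (differentiableAt_coord k y)))]
    refine Finset.sum_congr rfl fun k _ => ?_
    rw [pd_mul _ _ _ _ (pd_Hfun_diffAt hsm i k hy) (differentiableAt_coord k y), pd_coord]
  have hR : pd (fun z => 2 * Hfun Γ i z) j y = 2 * pd (Hfun Γ i) j y :=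
    pd_const_mul _ _ _ _ (Hfun_diffAt hsm i hy)
  have hLR : pd (fun z => ∑ k, pd (Hfun Γ i) k z * z k) j y
      = pd (fun z => 2 * Hfun Γ i z) j y :=
    congrArg (fun (L : (Fin n → ℝ) →L[ℝ] ℝ) => L (Pi.single j 1)) hfd
  rw [hL, hR] at hLR
  have hsplit : ∑ k, (pd (fun z => pd (Hfun Γ i) k z) j y * y k
        + pd (Hfun Γ i) k y * (if k = j then 1 else 0))
      = (∑ k, pd (fun z => pd (Hfun Γ i) k z) j y * y k) + pd (Hfun Γ i) j y := by
    rw [Finset.sum_add_distrib]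
    congr 1
    simp
  rw [hsplit] at hLR
  linarith

lemma pdx_poly {U : Set (Fin n → ℝ)} (hU : IsOpen U)
    {a : (Fin m → Fin n) → (Fin n → ℝ) → ℝ}
    (ha_smooth : ∀ ι, ContDiffOn ℝ (⊤ : ℕ∞) (a ι) U)
    {A : (Fin n → ℝ) → (Fin n → ℝ) → ℝ}
    (hA : ∀ x ∈ U, ∀ y : Fin n → ℝ, A x y = ∑ ι : Fin m → Fin n, a ι x * ∏ k, y (ι k))
    (k : Fin n) {x : Fin n → ℝ} (hx : x ∈ U) :
    (pdx A k) x = polyFun m n (fun ι => fderiv ℝ (a ι) x (Pi.single k 1)) := by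
  funext y
  show fderiv ℝ (fun x' => A x' y) x (Pi.single k 1) = _
  have hev : (fun x' => A x' y)
      =ᶠ[nhds x] (fun x' => ∑ ι : Fin m → Fin n, a ι x' * ∏ k', y (ι k')) := by
    filter_upwards [hU.mem_nhds hx] with x' hx' using hA x' hx' y
  rw [hev.fderiv_eq]
  have hd : ∀ ι : Fin m → Fin n, DifferentiableAt ℝ (a ι) x :=
    fun ι => ((ha_smooth ι).differentiableOn (by simp)).differentiableAt
      (hU.mem_nhds hx)
  rw [fderiv_fun_sum (fun ι _ => (hd ι).mul_const _)]
  rw [ContinuousLinearMap.sum_apply]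
  refine Finset.sum_congr rfl fun ι _ => ?_
  rw [fderiv_mul_const (hd ι)]
  simp [mul_comm]

end AntonelliAux

open Matrix AntonelliAux

/-- An `m`-th root metric `F = A^{1/m}` is an Antonelli metric if and
only if there is an admissible family `Γ^i_{jk}(y)` with
`A_{x^l} = [Γ^i_{lk} y^k + (1/2) Γ^i_{jk,l} y^j y^k] A_i` for every `l`. -/
theorem antonelli_mth_root_characterization
    {n m : ℕ} (hm : 2 ≤ m)
    (U : Set (Fin n → ℝ)) (hU : IsOpen U)
    (a : (Fin m → Fin n) → (Fin n → ℝ) → ℝ)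
    (ha_smooth : ∀ ι, ContDiffOn ℝ (⊤ : ℕ∞) (a ι) U)
    (ha_symm : ∀ (ι : Fin m → Fin n) (σ : Equiv.Perm (Fin m)), a (ι ∘ σ) = a ι)
    (A : (Fin n → ℝ) → (Fin n → ℝ) → ℝ)
    (hA : ∀ x ∈ U, ∀ y : Fin n → ℝ, A x y = ∑ ι : Fin m → Fin n, a ι x * ∏ k, y (ι k))
    (hApos : ∀ x ∈ U, ∀ y : Fin n → ℝ, y ≠ 0 → 0 < A x y)
    -- (A^{ij}) : the inverse of the Hessian (A_{ij}) = (∂²A/∂y^i∂y^j)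
    (Ainv : (Fin n → ℝ) → (Fin n → ℝ) → Matrix (Fin n) (Fin n) ℝ)
    (hAinv : ∀ x ∈ U, ∀ y : Fin n → ℝ, y ≠ 0 →
      (Matrix.of fun i j => pdy (pdy A j) i x y) * Ainv x y = 1 ∧
      Ainv x y * (Matrix.of fun i j => pdy (pdy A j) i x y) = 1) :
    (∃ Γ : Fin n → Fin n → Fin n → (Fin n → ℝ) → ℝ, GammaAdmissible Γ ∧
      (∀ x ∈ U, ∀ y : Fin n → ℝ, y ≠ 0 → ∀ i : Fin n,
      (1 / 2) * ∑ j, ((∑ k, pdy (pdx A k) j x y * y k) - pdx A j x y) * Ainv x y i j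
        = (1 / 2) * ∑ j, ∑ k, Γ i j k y * y j * y k))
    ↔
    (∃ Γ : Fin n → Fin n → Fin n → (Fin n → ℝ) → ℝ, GammaAdmissible Γ ∧
      (∀ l : Fin n, ∀ x ∈ U, ∀ y : Fin n → ℝ, y ≠ 0 →
      pdx A l x y
        = ∑ i, ((∑ k, Γ i l k y * y k)
            + (1 / 2) * ∑ j, ∑ k, pd (Γ i j k) l y * y j * y k) * pdy A i x y)) := by
  have hm1 : (1:ℕ) ≤ m := le_trans one_le_two hm
  have hmR : (2:ℝ) ≤ (m:ℝ) := by exact_mod_cast hm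
  have hmne : ((m:ℝ) - 1) ≠ 0 := by linarith
  constructor
  · -- Forward direction
    rintro ⟨Γ, ⟨hsm, hsymm, hhom⟩, hmain⟩
    refine ⟨Γ, ⟨hsm, hsymm, hhom⟩, ?_⟩
    intro l x hx y hy
    -- bridges
    have hAx : A x = polyFun m n (fun ι => a ι x) := funext (hA x hx)
    set Pa : (Fin n → ℝ) → ℝ := polyFun m n (fun ι => a ι x) with hPadef
    set cD : Fin n → (Fin m → Fin n) → ℝ :=
      fun k ι => fderiv ℝ (a ι) x (Pi.single k 1) with hcDdef
    have h_pdx : ∀ k : Fin n, (pdx A k) x = polyFun m n (cD k) :=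
      fun k => pdx_poly hU ha_smooth hA k hx
    have h_pdyA : ∀ (i : Fin n) (y' : Fin n → ℝ), pdy A i x y' = pd Pa i y' := by
      intro i y'
      show fderiv ℝ (A x) y' (Pi.single i 1) = _
      rw [hAx]; rfl
    have h_pdyA_fun : ∀ i : Fin n, (pdy A i) x = fun y' => pd Pa i y' :=
      fun i => funext fun y' => h_pdyA i y'
    have h_hess : ∀ (i l' : Fin n) (y' : Fin n → ℝ),
        pdy (pdy A i) l' x y' = pd (fun z => pd Pa i z) l' y' := by
      intro i l' y'
      show fderiv ℝ ((pdy A i) x) y' (Pi.single l' 1) = _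
      rw [h_pdyA_fun i]; rfl
    have h_pdyx : ∀ (k j : Fin n) (y' : Fin n → ℝ),
        pdy (pdx A k) j x y' = pd (polyFun m n (cD k)) j y' := by
      intro k j y'
      show fderiv ℝ ((pdx A k) x) y' (Pi.single j 1) = _
      rw [h_pdx k]; rfl
    have hMof : ∀ y' : Fin n → ℝ, (Matrix.of fun i j => pdy (pdy A j) i x y')
        = Matrix.of (fun i j => pd (fun z => pd Pa j z) i y') := by
      intro y'; ext i j
      simp only [Matrix.of_apply]
      exact h_hess j i y'
    -- Step 1: the Hessian relation at every y' ≠ 0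
    have hv : ∀ y' : Fin n → ℝ, y' ≠ 0 → ∀ l' : Fin n,
        (∑ k, pd (polyFun m n (cD k)) l' y' * y' k) - polyFun m n (cD l') y'
          = ∑ i, pd (fun z => pd Pa i z) l' y' * (2 * Hfun Γ i y') := by
      intro y' hy' l'
      have hm1' : Ainv x y' *ᵥ
          (fun j => (∑ k, pd (polyFun m n (cD k)) j y' * y' k) - polyFun m n (cD j) y')
          = (fun i => 2 * Hfun Γ i y') := by
        funext i
        have h0 := hmain x hx y' hy' i
        simp only [h_pdyx] at h0
        simp only [h_pdx] at h0
        have hrfl : (1/2 : ℝ) * ∑ j, ∑ k, Γ i j k y' * y' j * y' k = Hfun Γ i y' := rfl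
        rw [hrfl] at h0
        have hmv : (Ainv x y' *ᵥ
            (fun j => (∑ k, pd (polyFun m n (cD k)) j y' * y' k) - polyFun m n (cD j) y')) i
            = ∑ j, Ainv x y' i j *
              ((∑ k, pd (polyFun m n (cD k)) j y' * y' k) - polyFun m n (cD j) y') := by
          simp [Matrix.mulVec, dotProduct]
        rw [hmv]
        have hsw : ∑ j, Ainv x y' i j *
              ((∑ k, pd (polyFun m n (cD k)) j y' * y' k) - polyFun m n (cD j) y')
            = ∑ j, ((∑ k, pd (polyFun m n (cD k)) j y' * y' k) - polyFun m n (cD j) y')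
              * Ainv x y' i j :=
          Finset.sum_congr rfl fun j _ => mul_comm _ _
        rw [hsw]
        linarith [h0]
      have hOA := (hAinv x hx y' hy').1
      rw [hMof y'] at hOA
      have h2 : (fun j => (∑ k, pd (polyFun m n (cD k)) j y' * y' k) - polyFun m n (cD j) y')
          = (Matrix.of (fun i j => pd (fun z => pd Pa j z) i y'))
            *ᵥ (fun i => 2 * Hfun Γ i y') := by
        conv_lhs => rw [← Matrix.one_mulVec
          (fun j => (∑ k, pd (polyFun m n (cD k)) j y' * y' k) - polyFun m n (cD j) y'),
          ← hOA, ← Matrix.mulVec_mulVec, hm1']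
      have h3 := congrFun h2 l'
      rw [h3]
      simp [Matrix.mulVec, dotProduct]
    -- Step 2: contraction gives the key scalar identity at every y' ≠ 0
    have key : ∀ y' : Fin n → ℝ, y' ≠ 0 →
        ∑ k, polyFun m n (cD k) y' * y' k = 2 * ∑ i, Hfun Γ i y' * pd Pa i y' := by
      intro y' hy'
      have hsum : ∑ l', ((∑ k, pd (polyFun m n (cD k)) l' y' * y' k)
            - polyFun m n (cD l') y') * y' l'
          = ∑ l', (∑ i, pd (fun z => pd Pa i z) l' y' * (2 * Hfun Γ i y')) * y' l' :=
        Finset.sum_congr rfl fun l' _ => by rw [hv y' hy' l']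
      have hLHS : ∑ l', ((∑ k, pd (polyFun m n (cD k)) l' y' * y' k)
            - polyFun m n (cD l') y') * y' l'
          = (m : ℝ) * (∑ k, polyFun m n (cD k) y' * y' k)
            - ∑ l', polyFun m n (cD l') y' * y' l' := by
        have e1 : ∑ l', (∑ k, pd (polyFun m n (cD k)) l' y' * y' k) * y' l'
            = (m : ℝ) * ∑ k, polyFun m n (cD k) y' * y' k := by
          calc ∑ l', (∑ k, pd (polyFun m n (cD k)) l' y' * y' k) * y' l'
              = ∑ l', ∑ k, (pd (polyFun m n (cD k)) l' y' * y' k) * y' l' := by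
                exact Finset.sum_congr rfl fun l' _ => Finset.sum_mul _ _ _
            _ = ∑ k, ∑ l', (pd (polyFun m n (cD k)) l' y' * y' k) * y' l' :=
                Finset.sum_comm
            _ = ∑ k, (∑ l', pd (polyFun m n (cD k)) l' y' * y' l') * y' k := by
                refine Finset.sum_congr rfl fun k _ => ?_
                rw [Finset.sum_mul]
                exact Finset.sum_congr rfl fun l' _ => by ring
            _ = ∑ k, ((m : ℝ) * polyFun m n (cD k) y') * y' k := by
                refine Finset.sum_congr rfl fun k _ => ?_
                rw [euler_polyFun (cD k) y']
            _ = (m : ℝ) * ∑ k, polyFun m n (cD k) y' * y' k := by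
                rw [Finset.mul_sum]
                exact Finset.sum_congr rfl fun k _ => by ring
        rw [← e1]
        rw [← Finset.sum_sub_distrib]
        exact Finset.sum_congr rfl fun l' _ => by ring
      have hRHS : ∑ l', (∑ i, pd (fun z => pd Pa i z) l' y' * (2 * Hfun Γ i y')) * y' l'
          = ((m : ℝ) - 1) * (2 * ∑ i, Hfun Γ i y' * pd Pa i y') := by
        calc ∑ l', (∑ i, pd (fun z => pd Pa i z) l' y' * (2 * Hfun Γ i y')) * y' l'
            = ∑ l', ∑ i, (pd (fun z => pd Pa i z) l' y' * (2 * Hfun Γ i y')) * y' l' := by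
              exact Finset.sum_congr rfl fun l' _ => Finset.sum_mul _ _ _
          _ = ∑ i, ∑ l', (pd (fun z => pd Pa i z) l' y' * (2 * Hfun Γ i y')) * y' l' :=
              Finset.sum_comm
          _ = ∑ i, (2 * Hfun Γ i y') * (∑ l', pd (fun z => pd Pa i z) l' y' * y' l') := by
              refine Finset.sum_congr rfl fun i _ => ?_
              rw [Finset.mul_sum]
              exact Finset.sum_congr rfl fun l' _ => by ring
          _ = ∑ i, (2 * Hfun Γ i y') * (((m : ℝ) - 1) * pd Pa i y') := by
              refine Finset.sum_congr rfl fun i _ => ?_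
              rw [euler_pd_polyFun hm1 (fun ι => a ι x) i y']
          _ = ((m : ℝ) - 1) * (2 * ∑ i, Hfun Γ i y' * pd Pa i y') := by
              rw [Finset.mul_sum, Finset.mul_sum]
              exact Finset.sum_congr rfl fun i _ => by ring
      rw [hLHS, hRHS] at hsum
      -- hsum : m * S - S = (m-1) * (2*T)
      have hfinal : ((m : ℝ) - 1) * (∑ k, polyFun m n (cD k) y' * y' k)
          = ((m : ℝ) - 1) * (2 * ∑ i, Hfun Γ i y' * pd Pa i y') := by linarith
      exact mul_left_cancel₀ hmne hfinal
    -- Step 3: differentiate the key identity at y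
    have heq : (fun z => ∑ k, polyFun m n (cD k) z * z k)
        =ᶠ[nhds y] (fun z => 2 * ∑ i, Hfun Γ i z * pd Pa i z) := by
      filter_upwards [(isOpen_ne (x := (0 : Fin n → ℝ))).mem_nhds hy] with z hz
      exact key z hz
    have hfd := heq.fderiv_eq (𝕜 := ℝ)
    have hpdeq : pd (fun z => ∑ k, polyFun m n (cD k) z * z k) l y
        = pd (fun z => 2 * ∑ i, Hfun Γ i z * pd Pa i z) l y :=
      congrArg (fun (L : (Fin n → ℝ) →L[ℝ] ℝ) => L (Pi.single l 1)) hfd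
    have hLpd : pd (fun z => ∑ k, polyFun m n (cD k) z * z k) l y
        = (∑ k, pd (polyFun m n (cD k)) l y * y k) + polyFun m n (cD l) y := by
      rw [pd_sum _ _ _ _ (fun k _ => ((polyFun_diff (cD k)) y).fun_mul (differentiableAt_coord k y))]
      have : ∀ k : Fin n, pd (fun z => polyFun m n (cD k) z * z k) l y
          = pd (polyFun m n (cD k)) l y * y k
            + polyFun m n (cD k) y * (if k = l then 1 else 0) := by
        intro k
        rw [pd_mul _ _ _ _ ((polyFun_diff (cD k)) y) (differentiableAt_coord k y), pd_coord]
      simp_rw [this]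
      rw [Finset.sum_add_distrib]
      congr 1
      simp
    have hRpd : pd (fun z => 2 * ∑ i, Hfun Γ i z * pd Pa i z) l y
        = 2 * ∑ i, (pd (Hfun Γ i) l y * pd Pa i y + Hfun Γ i y * pd (fun z => pd Pa i z) l y) := by
      rw [pd_const_mul _ _ _ _ (DifferentiableAt.fun_sum fun i _ =>
        (Hfun_diffAt hsm i hy).fun_mul ((pd_polyFun_diff (fun ι => a ι x) i) y))]
      congr 1
      rw [pd_sum _ _ _ _ (fun i _ =>
        (Hfun_diffAt hsm i hy).fun_mul ((pd_polyFun_diff (fun ι => a ι x) i) y))]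
      refine Finset.sum_congr rfl fun i _ => ?_
      rw [pd_mul _ _ _ _ (Hfun_diffAt hsm i hy) ((pd_polyFun_diff (fun ι => a ι x) i) y)]
    -- combine with hv at y
    have hvy := hv y hy l
    have hsplit : (2:ℝ) * ∑ i, (pd (Hfun Γ i) l y * pd Pa i y
          + Hfun Γ i y * pd (fun z => pd Pa i z) l y)
        = 2 * (∑ i, pd (Hfun Γ i) l y * pd Pa i y)
          + ∑ i, pd (fun z => pd Pa i z) l y * (2 * Hfun Γ i y) := by
      rw [Finset.sum_add_distrib]
      rw [mul_add]
      congr 1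
      rw [Finset.mul_sum]
      exact Finset.sum_congr rfl fun i _ => by ring
    rw [hLpd, hRpd] at hpdeq
    rw [hsplit] at hpdeq
    -- hpdeq : A0 + P_l = 2*Σ pdH*pdPa + Σ pd(pdPa)*2H ; hvy : A0 - P_l = Σ pd(pdPa)*2H
    have hPl : polyFun m n (cD l) y = ∑ i, pd (Hfun Γ i) l y * pd Pa i y := by linarith
    -- conclude
    have hgoal : ∀ i : Fin n, ((∑ k, Γ i l k y * y k)
        + (1 / 2) * ∑ j, ∑ k, pd (Γ i j k) l y * y j * y k) = pd (Hfun Γ i) l y :=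
      fun i => (pd_Hfun hsm hsymm i l hy).symm
    calc pdx A l x y = polyFun m n (cD l) y := congrFun (h_pdx l) y
      _ = ∑ i, pd (Hfun Γ i) l y * pd Pa i y := hPl
      _ = ∑ i, ((∑ k, Γ i l k y * y k)
            + (1 / 2) * ∑ j, ∑ k, pd (Γ i j k) l y * y j * y k) * pdy A i x y := by
          refine Finset.sum_congr rfl fun i _ => ?_
          rw [hgoal i, h_pdyA i y]
  · -- Converse direction
    rintro ⟨Γ, ⟨hsm, hsymm, hhom⟩, hmain⟩
    refine ⟨Γ, ⟨hsm, hsymm, hhom⟩, ?_⟩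
    intro x hx y hy i
    -- bridges (same as forward)
    have hAx : A x = polyFun m n (fun ι => a ι x) := funext (hA x hx)
    set Pa : (Fin n → ℝ) → ℝ := polyFun m n (fun ι => a ι x) with hPadef
    set cD : Fin n → (Fin m → Fin n) → ℝ :=
      fun k ι => fderiv ℝ (a ι) x (Pi.single k 1) with hcDdef
    have h_pdx : ∀ k : Fin n, (pdx A k) x = polyFun m n (cD k) :=
      fun k => pdx_poly hU ha_smooth hA k hx
    have h_pdx' : ∀ (k : Fin n) (y' : Fin n → ℝ), pdx A k x y' = polyFun m n (cD k) y' :=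
      fun k y' => congrFun (h_pdx k) y'
    have h_pdyA : ∀ (i' : Fin n) (y' : Fin n → ℝ), pdy A i' x y' = pd Pa i' y' := by
      intro i' y'
      show fderiv ℝ (A x) y' (Pi.single i' 1) = _
      rw [hAx]; rfl
    have h_pdyA_fun : ∀ i' : Fin n, (pdy A i') x = fun y' => pd Pa i' y' :=
      fun i' => funext fun y' => h_pdyA i' y'
    have h_hess : ∀ (i' l' : Fin n) (y' : Fin n → ℝ),
        pdy (pdy A i') l' x y' = pd (fun z => pd Pa i' z) l' y' := by
      intro i' l' y'
      show fderiv ℝ ((pdy A i') x) y' (Pi.single l' 1) = _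
      rw [h_pdyA_fun i']; rfl
    have h_pdyx : ∀ (k j : Fin n) (y' : Fin n → ℝ),
        pdy (pdx A k) j x y' = pd (polyFun m n (cD k)) j y' := by
      intro k j y'
      show fderiv ℝ ((pdx A k) x) y' (Pi.single j 1) = _
      rw [h_pdx k]; rfl
    have hMof : ∀ y' : Fin n → ℝ, (Matrix.of fun i' j => pdy (pdy A j) i' x y')
        = Matrix.of (fun i' j => pd (fun z => pd Pa j z) i' y') := by
      intro y'; ext i' j
      simp only [Matrix.of_apply]
      exact h_hess j i' y'
    -- hypothesis in polynomial form
    have hkey : ∀ (k : Fin n) (y' : Fin n → ℝ), y' ≠ 0 →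
        polyFun m n (cD k) y' = ∑ i', pd (Hfun Γ i') k y' * pd Pa i' y' := by
      intro k y' hy'
      have h0 := hmain k x hx y' hy'
      rw [h_pdx' k y'] at h0
      rw [h0]
      refine Finset.sum_congr rfl fun i' _ => ?_
      rw [h_pdyA i' y', pd_Hfun hsm hsymm i' k hy']
    -- differentiate hkey in direction j at y
    have hdkj : ∀ k j : Fin n, pd (polyFun m n (cD k)) j y
        = ∑ i', (pd (fun z => pd (Hfun Γ i') k z) j y * pd Pa i' y
            + pd (Hfun Γ i') k y * pd (fun z => pd Pa i' z) j y) := by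
      intro k j
      have heq : (polyFun m n (cD k))
          =ᶠ[nhds y] (fun z => ∑ i', pd (Hfun Γ i') k z * pd Pa i' z) := by
        filter_upwards [(isOpen_ne (x := (0 : Fin n → ℝ))).mem_nhds hy] with z hz
        exact hkey k z hz
      have hfd := heq.fderiv_eq (𝕜 := ℝ)
      have hpdeq : pd (polyFun m n (cD k)) j y
          = pd (fun z => ∑ i', pd (Hfun Γ i') k z * pd Pa i' z) j y :=
        congrArg (fun (L : (Fin n → ℝ) →L[ℝ] ℝ) => L (Pi.single j 1)) hfd
      rw [hpdeq]
      rw [pd_sum _ _ _ _ (fun i' _ => (pd_Hfun_diffAt hsm i' k hy).fun_mul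
        ((pd_polyFun_diff (fun ι => a ι x) i') y))]
      refine Finset.sum_congr rfl fun i' _ => ?_
      rw [pd_mul _ _ _ _ (pd_Hfun_diffAt hsm i' k hy) ((pd_polyFun_diff (fun ι => a ι x) i') y)]
    -- contract with y_k
    have hA0 : ∀ j : Fin n, ∑ k, pd (polyFun m n (cD k)) j y * y k
        = polyFun m n (cD j) y + ∑ i', pd (fun z => pd Pa i' z) j y * (2 * Hfun Γ i' y) := by
      intro j
      calc ∑ k, pd (polyFun m n (cD k)) j y * y k
          = ∑ k, (∑ i', (pd (fun z => pd (Hfun Γ i') k z) j y * pd Pa i' y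
              + pd (Hfun Γ i') k y * pd (fun z => pd Pa i' z) j y)) * y k :=
            Finset.sum_congr rfl fun k _ => by rw [hdkj k j]
        _ = ∑ k, ∑ i', (pd (fun z => pd (Hfun Γ i') k z) j y * pd Pa i' y
              + pd (Hfun Γ i') k y * pd (fun z => pd Pa i' z) j y) * y k :=
            Finset.sum_congr rfl fun k _ => Finset.sum_mul _ _ _
        _ = ∑ i', ∑ k, (pd (fun z => pd (Hfun Γ i') k z) j y * pd Pa i' y
              + pd (Hfun Γ i') k y * pd (fun z => pd Pa i' z) j y) * y k :=
            Finset.sum_comm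
        _ = ∑ i', ((∑ k, pd (fun z => pd (Hfun Γ i') k z) j y * y k) * pd Pa i' y
              + (∑ k, pd (Hfun Γ i') k y * y k) * pd (fun z => pd Pa i' z) j y) := by
            refine Finset.sum_congr rfl fun i' _ => ?_
            calc ∑ k, (pd (fun z => pd (Hfun Γ i') k z) j y * pd Pa i' y
                  + pd (Hfun Γ i') k y * pd (fun z => pd Pa i' z) j y) * y k
                = ∑ k, ((pd (fun z => pd (Hfun Γ i') k z) j y * y k) * pd Pa i' y
                  + (pd (Hfun Γ i') k y * y k) * pd (fun z => pd Pa i' z) j y) :=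
                  Finset.sum_congr rfl fun k _ => by ring
              _ = (∑ k, (pd (fun z => pd (Hfun Γ i') k z) j y * y k) * pd Pa i' y)
                  + ∑ k, (pd (Hfun Γ i') k y * y k) * pd (fun z => pd Pa i' z) j y :=
                  Finset.sum_add_distrib
              _ = (∑ k, pd (fun z => pd (Hfun Γ i') k z) j y * y k) * pd Pa i' y
                  + (∑ k, pd (Hfun Γ i') k y * y k) * pd (fun z => pd Pa i' z) j y := by
                  rw [← Finset.sum_mul, ← Finset.sum_mul]
        _ = ∑ i', (pd (Hfun Γ i') j y * pd Pa i' y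
              + (2 * Hfun Γ i' y) * pd (fun z => pd Pa i' z) j y) := by
            refine Finset.sum_congr rfl fun i' _ => ?_
            rw [euler_pd_Hfun hsm hhom i' j hy, euler_Hfun hsm hhom i' hy]
        _ = (∑ i', pd (Hfun Γ i') j y * pd Pa i' y)
              + ∑ i', pd (fun z => pd Pa i' z) j y * (2 * Hfun Γ i' y) := by
            rw [Finset.sum_add_distrib]
            congr 1
            exact Finset.sum_congr rfl fun i' _ => mul_comm _ _
        _ = polyFun m n (cD j) y + ∑ i', pd (fun z => pd Pa i' z) j y * (2 * Hfun Γ i' y) := by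
            rw [← hkey j y hy]
    -- matrix step
    have hveq : (fun j => (∑ k, pd (polyFun m n (cD k)) j y * y k) - polyFun m n (cD j) y)
        = (Matrix.of (fun i' j => pd (fun z => pd Pa j z) i' y))
          *ᵥ (fun i' => 2 * Hfun Γ i' y) := by
      funext j
      have h1 := hA0 j
      have hmv : ((Matrix.of (fun i' j => pd (fun z => pd Pa j z) i' y))
            *ᵥ (fun i' => 2 * Hfun Γ i' y)) j
          = ∑ i', pd (fun z => pd Pa i' z) j y * (2 * Hfun Γ i' y) := by
        simp [Matrix.mulVec, dotProduct]
      rw [hmv]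
      linarith [h1]
    have hIA := (hAinv x hx y hy).2
    rw [hMof y] at hIA
    have hw : Ainv x y *ᵥ
        (fun j => (∑ k, pd (polyFun m n (cD k)) j y * y k) - polyFun m n (cD j) y)
        = (fun i' => 2 * Hfun Γ i' y) := by
      rw [hveq, Matrix.mulVec_mulVec, hIA, Matrix.one_mulVec]
    have hwi := congrFun hw i
    have hmv2 : (Ainv x y *ᵥ
        (fun j => (∑ k, pd (polyFun m n (cD k)) j y * y k) - polyFun m n (cD j) y)) i
        = ∑ j, Ainv x y i j *
          ((∑ k, pd (polyFun m n (cD k)) j y * y k) - polyFun m n (cD j) y) := by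
      simp [Matrix.mulVec, dotProduct]
    rw [hmv2] at hwi
    -- final goal
    simp only [h_pdyx, h_pdx']
    have hrfl : (1/2 : ℝ) * ∑ j, ∑ k, Γ i j k y * y j * y k = Hfun Γ i y := rfl
    rw [show (1 / 2 : ℝ) * ∑ j, ∑ k, Γ i j k y * y j * y k = Hfun Γ i y from hrfl]
    have hsw : ∑ j, ((∑ k, pd (polyFun m n (cD k)) j y * y k) - polyFun m n (cD j) y)
          * Ainv x y i j
        = ∑ j, Ainv x y i j *
          ((∑ k, pd (polyFun m n (cD k)) j y * y k) - polyFun m n (cD j) y) :=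
      Finset.sum_congr rfl fun j _ => mul_comm _ _
    rw [hsw, hwi]
    ring
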